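/- With T defined by the recurrence T_1(δ_l) = w(l), T_1(κ) = 0 otherwise, and T_{h+1}(κ) = Σ_{l : κ(l) ≥ 1} T_h(κ − δ_l) · w(l) · ∏_{i ∈ Fin p} r(i)(l)^{(κ−δ_l)(i)}, for every n ≥ 1 the sum of T_n(κ) over all κ : Fin p → ℕ with Σ_i κ(i) = n equals Σ_{c : Fin n → Fin p} W_n(c), the total ordered weight over all cell assignments of the n-element domain. -/

import Mathlib

/-!
`T n κ` is the total ordered weight of the assignments `c : Fin n → Fin p` with configuration
`κ`. Appending a last element in cell `l` adds `δ_l` to the configuration and multiplies the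
ordered weight by `w l * ∏ i, r i l ^ config(c) i`, which is exactly the recursion defining `T`.
Every configuration of an `n`-element assignment sums to `n`, so summing over the fibres gives
the total ordered weight.
-/

open Finset

/-- The cell configuration of a cell assignment. -/
def cellConfig {p n : ℕ} (c : Fin n → Fin p) : Fin p → ℕ :=
  fun i => (Finset.univ.filter (fun a => c a = i)).card

/-- The indicator vector `δ_l`. -/
def delta {p : ℕ} (l : Fin p) : Fin p → ℕ := fun i => if i = l then 1 else 0

/-- The ordered weight of a cell assignment. -/
def ordW {R : Type*} [CommRing R] {p n : ℕ} (w : Fin p → R) (r : Fin p → Fin p → R)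
    (c : Fin n → Fin p) : R :=
  (∏ a, w (c a)) * ∏ a, ∏ b ∈ Finset.univ.filter (fun b => a < b), r (c a) (c b)

/-- The dynamic-programming table `T` of IncrementalWFOMC. -/
def T {R : Type*} [CommRing R] {p : ℕ} (w : Fin p → R) (r : Fin p → Fin p → R) :
    ℕ → (Fin p → ℕ) → R
  | 0, _ => 0
  | 1, κ => ∑ l : Fin p, if κ = delta l then w l else 0
  | h + 2, κ =>
      ∑ l ∈ Finset.univ.filter (fun l : Fin p => 1 ≤ κ l),
        T w r (h + 1) (κ - delta l) * w l * ∏ i, r i l ^ ((κ - delta l) i)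

section CellConfig

variable {p n : ℕ}

lemma cellConfig_snoc (c : Fin n → Fin p) (l : Fin p) :
    cellConfig (Fin.snoc c l) = cellConfig c + delta l := by
  funext i
  simp only [cellConfig, delta, Pi.add_apply, card_filter, Fin.sum_univ_castSucc,
    Fin.snoc_castSucc, Fin.snoc_last]
  simp [eq_comm]

lemma cellConfig_zero (c : Fin 0 → Fin p) : cellConfig c = 0 := by
  funext i
  simp [cellConfig]

lemma sum_cellConfig (c : Fin n → Fin p) : ∑ i, cellConfig c i = n := by
  simpa [cellConfig] using (card_eq_sum_card_fiberwise (s := univ) (t := univ)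
    fun a _ => mem_univ (c a)).symm

lemma prod_comp_eq_prod_pow_cellConfig {M : Type*} [CommMonoid M] (c : Fin n → Fin p)
    (g : Fin p → M) : ∏ a, g (c a) = ∏ i, g i ^ cellConfig c i := by
  rw [← prod_fiberwise' univ c g]
  simp [cellConfig]

lemma add_delta_eq_iff (l : Fin p) (f κ : Fin p → ℕ) :
    f + delta l = κ ↔ 1 ≤ κ l ∧ f = κ - delta l := by
  constructor
  · rintro rfl
    refine ⟨by simp [delta], ?_⟩
    funext i
    simp
  · rintro ⟨hl, rfl⟩
    funext i
    simp only [Pi.sub_apply, Pi.add_apply, delta]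
    split_ifs with hi
    · subst hi; omega
    · omega

end CellConfig

section Weights

variable {R : Type*} [CommRing R] {p : ℕ} (w : Fin p → R) (r : Fin p → Fin p → R)

lemma ordW_zero (c : Fin 0 → Fin p) : ordW w r c = 1 := by
  simp [ordW]

lemma ordW_snoc {n : ℕ} (c : Fin n → Fin p) (l : Fin p) :
    ordW w r (Fin.snoc c l) = ordW w r c * w l * ∏ i, r i l ^ cellConfig c i := by
  have hpairs : ∀ a : Fin n,
      ∏ b ∈ univ.filter (Fin.castSucc a < ·), r (c a) (Fin.snoc (α := fun _ => Fin p) c l b)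
        = (∏ b ∈ univ.filter (a < ·), r (c a) (c b)) * r (c a) l := by
    intro a
    simp only [prod_filter, Fin.prod_univ_castSucc, Fin.castSucc_lt_castSucc_iff,
      Fin.snoc_castSucc, Fin.snoc_last, Fin.castSucc_lt_last, if_true]
  have hlast : univ.filter (Fin.last n < ·) = ∅ :=
    filter_false_of_mem fun b _ => (Fin.le_last b).not_gt
  rw [ordW, ordW, ← prod_comp_eq_prod_pow_cellConfig c (r · l), Fin.prod_univ_castSucc,
    Fin.prod_univ_castSucc, hlast, prod_empty, mul_one]
  simp only [Fin.snoc_castSucc, Fin.snoc_last, hpairs, prod_mul_distrib]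
  ring

def fiberOrdW (n : ℕ) (κ : Fin p → ℕ) : R :=
  ∑ c : Fin n → Fin p with cellConfig c = κ, ordW w r c

lemma fiberOrdW_zero (κ : Fin p → ℕ) : fiberOrdW w r 0 κ = if κ = 0 then 1 else 0 := by
  simp only [fiberOrdW, sum_filter, cellConfig_zero, ordW_zero]
  simp [eq_comm]

lemma fiberOrdW_succ (n : ℕ) (κ : Fin p → ℕ) :
    fiberOrdW w r (n + 1) κ = ∑ l ∈ univ.filter (1 ≤ κ ·),
      fiberOrdW w r n (κ - delta l) * w l * ∏ i, r i l ^ (κ - delta l) i := by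
  have hsnoc : fiberOrdW w r (n + 1) κ = ∑ l, ∑ c : Fin n → Fin p,
      if cellConfig c + delta l = κ then ordW w r c * w l * ∏ i, r i l ^ cellConfig c i
      else 0 := by
    rw [fiberOrdW, sum_filter, ← Fintype.sum_prod_type',
      ← (Fin.snocEquiv fun _ => Fin p).sum_comp]
    exact sum_congr rfl fun q _ => by rw [← cellConfig_snoc, ← ordW_snoc]; rfl
  rw [hsnoc, sum_filter]
  refine sum_congr rfl fun l _ => ?_
  by_cases hl : 1 ≤ κ l
  · simp only [add_delta_eq_iff, hl, true_and, if_true, fiberOrdW, sum_mul]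
    rw [← sum_filter]
    exact sum_congr rfl fun c hc => by rw [(mem_filter.mp hc).2]
  · simp [add_delta_eq_iff, hl]

lemma T_succ_eq_fiberOrdW (n : ℕ) (κ : Fin p → ℕ) :
    T w r (n + 1) κ = fiberOrdW w r (n + 1) κ := by
  induction n generalizing κ with
  | zero =>
    -- `T 1` is the recursion applied to `fiberOrdW 0`, the indicator of the empty configuration.
    rw [fiberOrdW_succ, sum_filter, T]
    refine sum_congr rfl fun l _ => ?_
    have hδ : 1 ≤ κ l ∧ κ - delta l = 0 ↔ κ = delta l := by
      rw [eq_comm (a := κ - delta l), ← add_delta_eq_iff, zero_add, eq_comm]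
    simp only [fiberOrdW_zero, ite_mul, one_mul, zero_mul, ← ite_and, hδ]
    split_ifs with hκ
    · simp [hκ, delta]
    · rfl
  | succ n ih =>
    rw [fiberOrdW_succ, T]
    simp only [ih]

end Weights

theorem stmt2_general {R : Type*} [CommRing R] {p : ℕ}
    (w : Fin p → R) (r : Fin p → Fin p → R) (n : ℕ) (hn : 1 ≤ n) :
    ∑ κ ∈ Finset.Nat.antidiagonalTuple p n, T w r n κ =
      ∑ c : Fin n → Fin p, ordW w r c := by
  obtain ⟨m, rfl⟩ := Nat.exists_eq_add_of_le' hn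
  simp only [T_succ_eq_fiberOrdW, fiberOrdW]
  exact sum_fiberwise_of_maps_to (fun c _ => Nat.mem_antidiagonalTuple.mpr (sum_cellConfig c)) _

theorem stmt2 {R : Type*} [CommRing R] {p : ℕ} (hp : 1 ≤ p)
    (w : Fin p → R) (r : Fin p → Fin p → R) (n : ℕ) (hn : 1 ≤ n) :
    ∑ κ ∈ Finset.Nat.antidiagonalTuple p n, T w r n κ =
      ∑ c : Fin n → Fin p, ordW w r c :=
  stmt2_general w r n hn
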